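/- arXiv:2007.11929 — 4 statements merged into one kernel-verified Lean document; each statement's English description precedes it below -/
import Mathlib

section
/- Let n ≥ 1, let A ∈ Matrix (Fin n) (Fin n) ℝ be skew-symmetric (Aᵀ = -A), and let m pairs (i_1,j_1),…,(i_m,j_m) in Fin n with i_k ≠ j_k be given. Let G_contr be the simple graph on Fin n with edge set {{i_1,j_1},…,{i_m,j_m}} and let G_drift be the simple graph on Fin n with an edge {i,j} (i ≠ j) exactly when A i j ≠ 0. Suppose that every connected component of G_contr contains at least three vertices, i.e., for every v : Fin n the set of vertices reachable from v in G_contr has at least three elements. Then the Lie subalgebra of Matrix (Fin n) (Fin n) ℝ generated by {A} ∪ {B i_1 j_1, …, B i_m j_m} equals so(n) if and only if the union graph G_drift ⊔ G_contr (the simple graph whose edge set is the union of the two edge sets) is connected. (This is the Lie algebra rank condition characterizing controllability of the bilinear system dX/dt = A X + (∑_k u_k(t) B i_k j_k) X on SO(n).) -/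
open Matrix

attribute [local instance 100] LieRing.ofAssociativeRing

/-- The standard basis matrix `E i j`. -/
noncomputable def E {n : ℕ} (i j : Fin n) : Matrix (Fin n) (Fin n) ℝ :=
  Matrix.single i j 1

/-- `B i j = E i j - E j i`, a basis element of `so(n)`. -/
noncomputable def B {n : ℕ} (i j : Fin n) : Matrix (Fin n) (Fin n) ℝ :=
  E i j - E j i

/-- The special orthogonal Lie algebra `so(n)` of skew-symmetric matrices. -/
def so (n : ℕ) : LieSubalgebra ℝ (Matrix (Fin n) (Fin n) ℝ) where
  carrier := {X | Xᵀ = -X}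
  add_mem' := by
    intro X Y hX hY
    simp only [Set.mem_setOf_eq] at *
    rw [Matrix.transpose_add, hX, hY, neg_add]
  zero_mem' := by simp
  smul_mem' := by
    intro c X hX
    simp only [Set.mem_setOf_eq] at *
    rw [Matrix.transpose_smul, hX, smul_neg]
  lie_mem' := by
    intro X Y hX hY
    simp only [Set.mem_setOf_eq] at *
    rw [Ring.lie_def, Matrix.transpose_sub, Matrix.transpose_mul, Matrix.transpose_mul, hX, hY]
    simp [neg_mul_neg, neg_sub]

/-! Every generator is skew, so the generated algebra `g` lies in `so n`. If the union graph is
disconnected, every generator, hence all of `g`, is block diagonal with respect to its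
components, so `g ≠ so n`. Conversely, since `⁅B p q, B q r⁆ = B p r`, if `B p q ∈ g` along the
edges of a graph then `B p q ∈ g` for all `p, q` in a common component; controlled edges carry
generators. For a drift edge `p q` between two controlled components, pick `a, b` in the
component of `p` and `c, d` in that of `q` (components have at least three vertices): on skew
matrices `ad (B p a) ^ 2`, `ad (B q c) ^ 2`, `1 + ad (B a b) ^ 2` and `1 + ad (B c d) ^ 2` act as
entrywise masks, which together cut `A` down to `A p q • B p q`. Hence `B p q ∈ g` along every
edge of the union graph, and connectivity gives all of `so n`. -/

section BlockMatrices

variable {ι R : Type*} [Fintype ι] (s : Setoid ι)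

lemma Matrix.mul_apply_eq_zero_of_not_rel [Semiring R] {X Y : Matrix ι ι R}
    (hX : ∀ i j, ¬s i j → X i j = 0) (hY : ∀ i j, ¬s i j → Y i j = 0) {i j : ι}
    (hij : ¬s i j) : (X * Y) i j = 0 := by
  rw [mul_apply]
  refine Finset.sum_eq_zero fun k _ => ?_
  by_cases hik : s i k
  · rw [hY k j fun hkj => hij (s.iseqv.trans hik hkj), mul_zero]
  · rw [hX i k hik, zero_mul]

variable (R) [DecidableEq ι] [CommRing R]

def Matrix.blockLieSubalgebra : LieSubalgebra R (Matrix ι ι R) where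
  carrier := {X | ∀ i j, ¬s i j → X i j = 0}
  add_mem' hX hY i j h := by rw [Matrix.add_apply, hX i j h, hY i j h, add_zero]
  zero_mem' _ _ _ := rfl
  smul_mem' c _ hX i j h := by rw [Matrix.smul_apply, hX i j h, smul_zero]
  lie_mem' hX hY i j h := by
    rw [Ring.lie_def, Matrix.sub_apply, mul_apply_eq_zero_of_not_rel s hX hY h,
      mul_apply_eq_zero_of_not_rel s hY hX h, sub_zero]

end BlockMatrices

namespace SimpleGraph

variable {V : Type*}

lemma reachable_fromRel_of_rel {r : V → V → Prop} {u v : V} (h : r u v) :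
    (fromRel r).Reachable u v := by
  by_cases huv : u = v
  · exact huv ▸ Reachable.refl u
  · exact Adj.reachable ((fromRel_adj r u v).2 ⟨huv, Or.inl h⟩)

lemma exists_reachable_nodup_of_three_le_ncard {G : SimpleGraph V} {v : V}
    (hv : 3 ≤ {u | G.Reachable v u}.ncard) :
    ∃ a b, G.Reachable v a ∧ G.Reachable v b ∧ [v, a, b].Nodup := by
  have hfin : {u | G.Reachable v u}.Finite := Set.finite_of_ncard_pos (by omega)
  have hcard : 1 < ({u | G.Reachable v u} \ {v}).ncard := by
    rw [Set.ncard_sdiff_singleton_of_mem (s := {u | G.Reachable v u}) (Reachable.refl v)]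
    omega
  obtain ⟨a, b, ⟨ha, hav⟩, ⟨hb, hbv⟩, hab⟩ := (Set.one_lt_ncard_iff hfin.sdiff).1 hcard
  refine ⟨a, b, ha, hb, ?_⟩
  simp only [Set.mem_singleton_iff] at hav hbv
  simp [Ne.symm hav, Ne.symm hbv, hab]

end SimpleGraph

open SimpleGraph

section SkewMatrices

variable {n : ℕ}

lemma B_apply (p q x y : Fin n) :
    B p q x y = (if x = p ∧ y = q then 1 else 0) - (if x = q ∧ y = p then 1 else 0) := by
  simp [B, E, single_apply, eq_comm]

lemma eq_and_eq_or_of_B_apply_ne_zero {p q x y : Fin n} (h : B p q x y ≠ 0) :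
    (x = p ∧ y = q) ∨ (x = q ∧ y = p) := by
  by_contra hxy
  rw [B_apply, if_neg fun h' => hxy (Or.inl h'), if_neg fun h' => hxy (Or.inr h'), sub_zero] at h
  exact h rfl

@[simp] lemma B_self (p : Fin n) : B p p = 0 := sub_self _

lemma B_swap (p q : Fin n) : B q p = -B p q := (neg_sub _ _).symm

lemma B_mem_so (p q : Fin n) : B p q ∈ so n := by
  change (B p q)ᵀ = -B p q
  rw [B, E, E, transpose_sub, transpose_single, transpose_single, neg_sub]

lemma lie_B_B {p q r : Fin n} (hpq : p ≠ q) (hqr : q ≠ r) (hpr : p ≠ r) :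
    ⁅B p q, B q r⁆ = B p r := by
  simp only [B, E, Ring.lie_def, sub_mul, mul_sub, single_mul_single_same, mul_one,
    single_mul_single_of_ne _ _ _ _ hqr.symm, single_mul_single_of_ne _ _ _ _ hpq,
    single_mul_single_of_ne _ _ _ _ hpr, single_mul_single_of_ne _ _ _ _ hpr.symm,
    single_mul_single_of_ne _ _ _ _ hqr, single_mul_single_of_ne _ _ _ _ hpq.symm]
  abel

lemma lie_B_apply (p q x y : Fin n) (X : Matrix (Fin n) (Fin n) ℝ) :
    ⁅B p q, X⁆ x y = (if x = p then X q y else 0) - (if x = q then X p y else 0)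
      - (if y = q then X x p else 0) + (if y = p then X x q else 0) := by
  simp only [Ring.lie_def, Matrix.sub_apply, mul_apply, B_apply, sub_mul, mul_sub, ite_mul,
    mul_ite, ite_and, one_mul, mul_one, zero_mul, mul_zero, Finset.sum_sub_distrib,
    Finset.sum_ite_irrel, Finset.sum_const_zero, Finset.sum_ite_eq', Finset.mem_univ, if_true]
  ring

lemma apply_eq_neg_of_mem_so {X : Matrix (Fin n) (Fin n) ℝ} (hX : X ∈ so n) (x y : Fin n) :
    X y x = -X x y := by
  simpa using congrFun (congrFun hX x) y

lemma sum_smul_B_of_mem_so {X : Matrix (Fin n) (Fin n) ℝ} (hX : X ∈ so n) :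
    ∑ i, ∑ j, (X i j / 2) • B i j = X := by
  ext x y
  simp [Matrix.sum_apply, B_apply, mul_sub, Finset.sum_sub_distrib, ite_and,
    apply_eq_neg_of_mem_so hX y x]
  ring

lemma so_le_of_forall_B_mem {L : LieSubalgebra ℝ (Matrix (Fin n) (Fin n) ℝ)}
    (h : ∀ p q, B p q ∈ L) : so n ≤ L := fun _ hX =>
  sum_smul_B_of_mem_so hX ▸ sum_mem fun i _ => sum_mem fun j _ => L.smul_mem _ (h i j)

lemma lie_B_lie_B_apply {p q : Fin n} (hpq : p ≠ q) {X : Matrix (Fin n) (Fin n) ℝ}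
    (hX : X ∈ so n) (x y : Fin n) :
    ⁅B p q, ⁅B p q, X⁆⁆ x y = if (x = p ∨ x = q) ↔ (y = p ∨ y = q) then 0 else -X x y := by
  have hs := apply_eq_neg_of_mem_so hX
  have hd : ∀ a, X a a = 0 := fun a => by linarith [hs a a]
  simp only [lie_B_apply]
  by_cases hxp : x = p <;> by_cases hxq : x = q <;> by_cases hyp : y = p <;>
    by_cases hyq : y = q <;> simp [hxp, hxq, hyp, hyq, hpq, hpq.symm, hd] <;>
    linarith [hs p q, hs x y]

lemma add_lie_B_lie_B_apply {p q : Fin n} (hpq : p ≠ q) {X : Matrix (Fin n) (Fin n) ℝ}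
    (hX : X ∈ so n) (x y : Fin n) :
    (X + ⁅B p q, ⁅B p q, X⁆⁆) x y = if (x = p ∨ x = q) ↔ (y = p ∨ y = q) then X x y else 0 := by
  rw [Matrix.add_apply, lie_B_lie_B_apply hpq hX]
  split_ifs <;> ring

section LieSubalgebra

variable {L : LieSubalgebra ℝ (Matrix (Fin n) (Fin n) ℝ)}

lemma smul_B_mem_of_B_mem (hL : L ≤ so n) {X : Matrix (Fin n) (Fin n) ℝ} (hX : X ∈ L)
    {p a b q c d : Fin n} (hpab : [p, a, b].Nodup) (hqcd : [q, c, d].Nodup)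
    (hdisj : [p, a, b].Disjoint [q, c, d])
    (hBpa : B p a ∈ L) (hBab : B a b ∈ L) (hBqc : B q c ∈ L) (hBcd : B c d ∈ L) :
    X p q • B p q ∈ L := by
  obtain ⟨Y, hY, hYX⟩ : ∃ Y ∈ L, Y = ⁅B p a, ⁅B p a, X⁆⁆ :=
    ⟨_, L.lie_mem hBpa (L.lie_mem hBpa hX), rfl⟩
  obtain ⟨Z, hZ, hZY⟩ : ∃ Z ∈ L, Z = ⁅B q c, ⁅B q c, Y⁆⁆ :=
    ⟨_, L.lie_mem hBqc (L.lie_mem hBqc hY), rfl⟩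
  obtain ⟨W, hW, hWZ⟩ : ∃ W ∈ L, W = Z + ⁅B a b, ⁅B a b, Z⁆⁆ :=
    ⟨_, add_mem hZ (L.lie_mem hBab (L.lie_mem hBab hZ)), rfl⟩
  have hWpq : W + ⁅B c d, ⁅B c d, W⁆⁆ = X p q • B p q := by
    simp only [List.nodup_cons, List.mem_cons, List.not_mem_nil, or_false, not_or,
      List.nodup_nil, and_true, not_false_eq_true, List.disjoint_cons_right,
      List.disjoint_nil_right] at hpab hqcd hdisj
    obtain ⟨⟨hpa, hpb⟩, hab⟩ := hpab
    obtain ⟨⟨hqc, hqd⟩, hcd⟩ := hqcd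
    ext x y
    rw [add_lie_B_lie_B_apply hcd (hL hW), hWZ, add_lie_B_lie_B_apply hab (hL hZ), hZY,
      lie_B_lie_B_apply hqc (hL hY), hYX, lie_B_lie_B_apply hpa (hL hX), Matrix.smul_apply,
      B_apply, smul_eq_mul]
    have := apply_eq_neg_of_mem_so (hL hX) p q
    -- the four masks together keep exactly the entries `(p, q)` and `(q, p)`
    grind
  exact hWpq ▸ add_mem hW (L.lie_mem hBcd (L.lie_mem hBcd hW))

lemma B_mem_of_reachable {G : SimpleGraph (Fin n)} (hG : ∀ p q, G.Adj p q → B p q ∈ L)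
    {p q : Fin n} (h : G.Reachable p q) : B p q ∈ L := by
  obtain ⟨w⟩ := h
  induction w with
  | nil => simp
  | @cons p z q hpz _ ih =>
    by_cases hpq : p = q
    · simp [hpq]
    by_cases hzq : z = q
    · exact hzq ▸ hG p z hpz
    rw [← lie_B_B hpz.ne hzq hpq]
    exact L.lie_mem (hG p z hpz) ih

lemma B_mem_of_fromRel_adj {r : Fin n → Fin n → Prop} (hr : ∀ p q, r p q → B p q ∈ L) :
    ∀ p q, (fromRel r).Adj p q → B p q ∈ L := by
  intro p q h
  rcases ((fromRel_adj r p q).1 h).2 with hpq | hqp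
  · exact hr p q hpq
  · rw [← neg_neg (B p q), ← B_swap]
    exact neg_mem (hr q p hqp)

lemma B_mem_of_apply_ne_zero (hL : L ≤ so n) {X : Matrix (Fin n) (Fin n) ℝ} (hX : X ∈ L)
    {G : SimpleGraph (Fin n)} (hG : ∀ p q, G.Adj p q → B p q ∈ L)
    (hcomp : ∀ v, 3 ≤ {u | G.Reachable v u}.ncard) {p q : Fin n} (hXpq : X p q ≠ 0) :
    B p q ∈ L := by
  by_cases hpq : G.Reachable p q
  · exact B_mem_of_reachable hG hpq
  obtain ⟨a, b, hpa, hpb, hpab⟩ := exists_reachable_nodup_of_three_le_ncard (hcomp p)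
  obtain ⟨c, d, hqc, hqd, hqcd⟩ := exists_reachable_nodup_of_three_le_ncard (hcomp q)
  have hp : ∀ x ∈ [p, a, b], G.Reachable p x := by simp [hpa, hpb]
  have hq : ∀ x ∈ [q, c, d], G.Reachable q x := by simp [hqc, hqd]
  have hdisj : [p, a, b].Disjoint [q, c, d] := fun x hxp hxq =>
    hpq ((hp x hxp).trans (hq x hxq).symm)
  have hBpq := smul_B_mem_of_B_mem hL hX hpab hqcd hdisj (B_mem_of_reachable hG hpa)
    (B_mem_of_reachable hG (hpa.symm.trans hpb)) (B_mem_of_reachable hG hqc)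
    (B_mem_of_reachable hG (hqc.symm.trans hqd))
  exact (L.toSubmodule.smul_mem_iff hXpq).1 hBpq

end LieSubalgebra

lemma connected_of_so_le_lieSpan [Nonempty (Fin n)] {G : SimpleGraph (Fin n)}
    {S : Set (Matrix (Fin n) (Fin n) ℝ)} (hS : ∀ X ∈ S, ∀ i j, X i j ≠ 0 → G.Reachable i j)
    (h : so n ≤ LieSubalgebra.lieSpan ℝ _ S) : G.Connected := by
  have hblock : LieSubalgebra.lieSpan ℝ _ S ≤ blockLieSubalgebra ℝ G.reachableSetoid :=
    LieSubalgebra.lieSpan_le.2 fun X hX i j hij => not_not.1 (mt (hS X hX i j) hij)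
  refine (connected_iff G).2 ⟨fun i j => ?_, inferInstance⟩
  by_contra hij
  have hBij := hblock (h (B_mem_so i j)) i j hij
  have hne : i ≠ j := fun h => hij (h ▸ Reachable.refl i)
  simp [B_apply, hne] at hBij

end SkewMatrices

theorem SOn_controllability_iff_union_connected_general
    (n m : ℕ) (hn : 1 ≤ n) (A : Matrix (Fin n) (Fin n) ℝ) (hA : Aᵀ = -A)
    (ij : Fin m → Fin n × Fin n)
    (Gcontr Gdrift : SimpleGraph (Fin n))
    (hGc : Gcontr = SimpleGraph.fromRel fun a b => ∃ k, ij k = (a, b))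
    (hGd : Gdrift = SimpleGraph.fromRel fun a b => A a b ≠ 0)
    (hcomp : ∀ v : Fin n, 3 ≤ {u : Fin n | Gcontr.Reachable v u}.ncard) :
    LieSubalgebra.lieSpan ℝ (Matrix (Fin n) (Fin n) ℝ)
        ({A} ∪ Set.range fun k => B (ij k).1 (ij k).2) = so n ↔
      (Gdrift ⊔ Gcontr).Connected := by
  subst hGc hGd
  set g := LieSubalgebra.lieSpan ℝ (Matrix (Fin n) (Fin n) ℝ)
    ({A} ∪ Set.range fun k => B (ij k).1 (ij k).2)
  have hg : g ≤ so n := LieSubalgebra.lieSpan_le.2 <| by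
    rintro X (rfl | ⟨k, rfl⟩)
    exacts [hA, B_mem_so _ _]
  have hBc : ∀ p q, (fromRel fun a b => ∃ k, ij k = (a, b)).Adj p q → B p q ∈ g :=
    B_mem_of_fromRel_adj fun _ _ ⟨k, hk⟩ =>
      LieSubalgebra.subset_lieSpan (Or.inr ⟨k, by simp [hk]⟩)
  constructor
  · intro h
    have : Nonempty (Fin n) := ⟨⟨0, hn⟩⟩
    refine connected_of_so_le_lieSpan ?_ h.ge
    rintro X (rfl | ⟨k, rfl⟩) x y hxy
    · exact (reachable_fromRel_of_rel (r := fun a b => X a b ≠ 0) hxy).mono le_sup_left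
    · obtain ⟨rfl, rfl⟩ | ⟨rfl, rfl⟩ := eq_and_eq_or_of_B_apply_ne_zero hxy
      · exact (reachable_fromRel_of_rel ⟨k, rfl⟩).mono le_sup_right
      · exact ((reachable_fromRel_of_rel ⟨k, rfl⟩).mono le_sup_right).symm
  · intro hconn
    have hBd : ∀ p q, (fromRel fun a b => A a b ≠ 0).Adj p q → B p q ∈ g :=
      B_mem_of_fromRel_adj fun _ _ =>
        B_mem_of_apply_ne_zero hg (LieSubalgebra.subset_lieSpan (Or.inl rfl)) hBc hcomp
    refine le_antisymm hg (so_le_of_forall_B_mem fun p q =>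
      B_mem_of_reachable ?_ (hconn.preconnected p q))
    rintro p q (h | h)
    exacts [hBd p q h, hBc p q h]

/-- Lie algebra rank condition for the bilinear system with drift on `SO(n)`:
if every connected component of the controlled interaction graph has at least three
vertices, then the generated Lie algebra equals `so(n)` iff the union of the drift and
controlled interaction graphs is connected. -/
theorem SOn_controllability_iff_union_connected
    (n m : ℕ) (hn : 1 ≤ n) (A : Matrix (Fin n) (Fin n) ℝ) (hA : Aᵀ = -A)
    (ij : Fin m → Fin n × Fin n) (hij : ∀ k, (ij k).1 ≠ (ij k).2)
    (Gcontr Gdrift : SimpleGraph (Fin n))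
    (hGc : Gcontr = SimpleGraph.fromRel fun a b => ∃ k, ij k = (a, b))
    (hGd : Gdrift = SimpleGraph.fromRel fun a b => A a b ≠ 0)
    (hcomp : ∀ v : Fin n, 3 ≤ {u : Fin n | Gcontr.Reachable v u}.ncard) :
    LieSubalgebra.lieSpan ℝ (Matrix (Fin n) (Fin n) ℝ)
        ({A} ∪ Set.range fun k => B (ij k).1 (ij k).2) = so n ↔
      (Gdrift ⊔ Gcontr).Connected :=
  SOn_controllability_iff_union_connected_general n m hn A hA ij Gcontr Gdrift hGc hGd hcomp
end

section
/- Let n ≥ 1 and let (i_1,j_1),…,(i_m,j_m) be pairs in Fin n (equal indices, i.e., self-loops, are allowed). Then the Lie subalgebra of Matrix (Fin n) (Fin n) ℝ generated by {E i_1 j_1, …, E i_m j_m} is all of Matrix (Fin n) (Fin n) ℝ (i.e., equals ⊤) if and only if the digraph on Fin n with arc set {(i_1,j_1),…,(i_m,j_m)} is strongly connected and has at least one self-loop (there exists k with i_k = j_k). (This is the Lie algebra rank condition characterizing controllability of the driftless bilinear system on GL⁺(n).) -/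
open Matrix

attribute [local instance 100] LieRing.ofAssociativeRing

/-- A digraph is strongly connected if every vertex is reachable from every vertex. -/
def StronglyConnected {V : Type*} (Adj : V → V → Prop) : Prop :=
  ∀ u v : V, Relation.ReflTransGen Adj u v

/-! If the digraph is not strongly connected, say `v` is unreachable from `u`, the generators lie
in the Lie subalgebra of matrices vanishing off the reachability relation, which misses `E u v`.
If it has no loop, the generators are traceless, and so is their Lie span, which misses `1`
as `trace 1 = n ≠ 0`. Conversely, `⁅E a c, E c b⁆ = E a b` for `a ≠ b` produces every
off-diagonal `E a b` along a path from `a` to `b`, and `⁅E a v, E v a⁆ = E a a - E v v` together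
with a loop `E v v` produces the diagonal. -/

namespace Matrix

variable {ι κ R : Type*} [Fintype ι]

theorem mul_apply_eq_zero_of_not_rel_s4 {r : ι → ι → Prop} [IsTrans ι r]
    [NonUnitalNonAssocSemiring R] {A B : Matrix ι ι R}
    (hA : ∀ x y, ¬ r x y → A x y = 0) (hB : ∀ x y, ¬ r x y → B x y = 0) {x y : ι}
    (hxy : ¬ r x y) : (A * B) x y = 0 := by
  rw [mul_apply]
  refine Finset.sum_eq_zero fun z _ => ?_
  by_cases hxz : r x z
  · rw [hB z y fun hzy => hxy (_root_.trans hxz hzy), mul_zero]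
  · rw [hA x z hxz, zero_mul]

variable [DecidableEq ι]

section Ring

variable [Ring R]

theorem single_lie_single_of_ne {a b : ι} (c : ι) (hab : a ≠ b) (x y : R) :
    ⁅single a c x, single c b y⁆ = single a b (x * y) := by
  rw [Ring.lie_def, single_mul_single_same, single_mul_single_of_ne (h := hab.symm), sub_zero]

theorem single_lie_single_swap (a b : ι) (x y : R) :
    ⁅single a b x, single b a y⁆ = single a a (x * y) - single b b (y * x) := by
  rw [Ring.lie_def, single_mul_single_same, single_mul_single_same]

end Ring

variable [CommRing R]

def supportedOnLieSubalgebra (r : ι → ι → Prop) [IsTrans ι r] :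
    LieSubalgebra R (Matrix ι ι R) where
  carrier := {A | ∀ x y, ¬ r x y → A x y = 0}
  add_mem' hA hB x y hxy := by rw [add_apply, hA x y hxy, hB x y hxy, add_zero]
  zero_mem' _ _ _ := rfl
  smul_mem' c A hA x y hxy := by rw [smul_apply, hA x y hxy, smul_zero]
  lie_mem' hA hB x y hxy := by
    rw [Ring.lie_def, sub_apply, mul_apply_eq_zero_of_not_rel_s4 hA hB hxy,
      mul_apply_eq_zero_of_not_rel_s4 hB hA hxy, sub_zero]

theorem mem_supportedOnLieSubalgebra {r : ι → ι → Prop} [IsTrans ι r] {A : Matrix ι ι R} :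
    A ∈ supportedOnLieSubalgebra (R := R) r ↔ ∀ x y, ¬ r x y → A x y = 0 :=
  Iff.rfl

theorem stronglyConnected_of_lieSpan_eq_top [Nontrivial R] (ij : κ → ι × ι)
    (h : LieSubalgebra.lieSpan R (Matrix ι ι R)
      (Set.range fun k => single (ij k).1 (ij k).2 (1 : R)) = ⊤) :
    StronglyConnected fun a b : ι => ∃ k, ij k = (a, b) := by
  intro u v
  by_contra huv
  let K : LieSubalgebra R (Matrix ι ι R) :=
    supportedOnLieSubalgebra (Relation.ReflTransGen fun a b : ι => ∃ k, ij k = (a, b))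
  have htop : ⊤ ≤ K := by
    refine h.ge.trans (LieSubalgebra.lieSpan_le.mpr ?_)
    rintro _ ⟨k, rfl⟩
    refine mem_supportedOnLieSubalgebra.mpr fun x y hxy => single_apply_of_ne _ _ _ x y ?_
    rintro ⟨rfl, rfl⟩
    exact hxy (.single ⟨k, rfl⟩)
  have huv_mem := htop (LieSubalgebra.mem_top (single u v (1 : R)))
  exact one_ne_zero <|
    (single_apply_same u v (1 : R)).symm.trans (mem_supportedOnLieSubalgebra.mp huv_mem u v huv)

theorem exists_diag_of_lieSpan_eq_top [Nonempty ι] [CharZero R] (ij : κ → ι × ι)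
    (h : LieSubalgebra.lieSpan R (Matrix ι ι R)
      (Set.range fun k => single (ij k).1 (ij k).2 (1 : R)) = ⊤) :
    ∃ k, (ij k).1 = (ij k).2 := by
  by_contra! hne
  have htop : ⊤ ≤ LieAlgebra.SpecialLinear.sl ι R := by
    refine h.ge.trans (LieSubalgebra.lieSpan_le.mpr ?_)
    rintro _ ⟨k, rfl⟩
    exact trace_single_eq_of_ne _ _ _ (hne k)
  have : trace (1 : Matrix ι ι R) = 0 := htop (LieSubalgebra.mem_top (1 : Matrix ι ι R))
  rw [trace_one] at this
  exact Nat.cast_ne_zero.mpr Fintype.card_ne_zero this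

variable {L : LieSubalgebra R (Matrix ι ι R)}

theorem single_mem_of_reflTransGen {Adj : ι → ι → Prop}
    (hAdj : ∀ a b, Adj a b → single a b (1 : R) ∈ L) {a b : ι}
    (hab : Relation.ReflTransGen Adj a b) (hne : a ≠ b) : single a b (1 : R) ∈ L := by
  induction hab with
  | refl => exact absurd rfl hne
  | @tail c b _ hcb ih =>
    by_cases hac : a = c
    · exact hac ▸ hAdj c b hcb
    · have := L.lie_mem (ih hac) (hAdj c b hcb)
      rwa [single_lie_single_of_ne c hne, mul_one] at this

theorem single_diag_mem (hoff : ∀ a b, a ≠ b → single a b (1 : R) ∈ L) {v : ι}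
    (hv : single v v (1 : R) ∈ L) (a : ι) : single a a (1 : R) ∈ L := by
  obtain rfl | hav := eq_or_ne a v
  · exact hv
  have hbr := L.lie_mem (hoff a v hav) (hoff v a hav.symm)
  rw [single_lie_single_swap, mul_one] at hbr
  simpa only [sub_add_cancel] using L.add_mem hbr hv

theorem eq_top_of_forall_single_mem (h : ∀ a b, single a b (1 : R) ∈ L) : L = ⊤ := by
  rw [← LieSubalgebra.toSubmodule_eq_top, eq_top_iff, ← (stdBasis R ι ι).span_eq,
    Submodule.span_le]
  rintro _ ⟨⟨a, b⟩, rfl⟩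
  rw [stdBasis_eq_single]
  exact h a b

theorem eq_top_of_stronglyConnected {Adj : ι → ι → Prop}
    (hAdj : ∀ a b, Adj a b → single a b (1 : R) ∈ L) (hsc : StronglyConnected Adj) {v : ι}
    (hv : Adj v v) : L = ⊤ := by
  have hoff a b (hne : a ≠ b) := single_mem_of_reflTransGen hAdj (hsc a b) hne
  refine eq_top_of_forall_single_mem fun a b => ?_
  obtain rfl | hne := eq_or_ne a b
  · exact single_diag_mem hoff (hAdj v v hv) a
  · exact hoff a b hne

theorem lieSpan_eq_top_of_stronglyConnected (ij : κ → ι × ι)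
    (hsc : StronglyConnected fun a b : ι => ∃ k, ij k = (a, b))
    (hloop : ∃ k, (ij k).1 = (ij k).2) :
    LieSubalgebra.lieSpan R (Matrix ι ι R)
      (Set.range fun k => single (ij k).1 (ij k).2 (1 : R)) = ⊤ := by
  obtain ⟨k, hk⟩ := hloop
  refine eq_top_of_stronglyConnected (v := (ij k).1) ?_ hsc ⟨k, Prod.ext rfl hk.symm⟩
  rintro a b ⟨k, hk⟩
  exact LieSubalgebra.subset_lieSpan ⟨k, by simp [hk]⟩

end Matrix

/-- Lie algebra rank condition for the driftless bilinear system on `GL⁺(n)`: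
the Lie algebra generated by the controlled terms is all of `gl(n, ℝ)` iff the
controlled interaction digraph is strongly connected and has at least one self-loop. -/
theorem driftless_GLn_controllability_iff
    (n m : ℕ) (hn : 1 ≤ n) (ij : Fin m → Fin n × Fin n) :
    LieSubalgebra.lieSpan ℝ (Matrix (Fin n) (Fin n) ℝ)
        (Set.range fun k => E (ij k).1 (ij k).2) = ⊤ ↔
      (StronglyConnected (fun a b : Fin n => ∃ k, ij k = (a, b)) ∧
        ∃ k, (ij k).1 = (ij k).2) := by
  have : Nonempty (Fin n) := ⟨⟨0, hn⟩⟩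
  exact ⟨fun h => ⟨stronglyConnected_of_lieSpan_eq_top ij h,
      exists_diag_of_lieSpan_eq_top ij h⟩,
    fun ⟨hsc, hloop⟩ => lieSpan_eq_top_of_stronglyConnected ij hsc hloop⟩
end

section
/- Let n ≥ 1, let A ∈ Matrix (Fin n) (Fin n) ℝ, and let (i_1,j_1),…,(i_m,j_m) be pairs in Fin n (self-loops allowed). Let G*_contr be the digraph on Fin n with arc set {(i_1,j_1),…,(i_m,j_m)}, and let G*_drift be the digraph with an arc (i,j) exactly when A i j ≠ 0. Suppose: (a) within each weakly connected component of G*_contr every vertex is reachable from every other by a directed path in G*_contr; (b) every weakly connected component of G*_contr contains at least two vertices; and (c) some weakly connected component of G*_contr contains at least three vertices. Then the Lie subalgebra of Matrix (Fin n) (Fin n) ℝ generated by {A} ∪ {E i_1 j_1, …, E i_m j_m} equals ⊤ (all of Matrix (Fin n) (Fin n) ℝ) if and only if both: (i) the union digraph G*_drift ∪ G*_contr is strongly connected, and (ii) G*_contr has at least one self-loop (some i_k = j_k) or trace A ≠ 0. (This is the Lie algebra rank condition characterizing accessibility of the bilinear system with drift A on GL⁺(n).) -/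
/-!
Call `a` and `b` linked when `a = b` or `E a b` lies in the generated Lie algebra `L`. Since
`⁅E a c, E c b⁆ = E a b` for `a ≠ b`, linkage is transitive, and by (a) it holds inside every
weakly connected component. Let `M` be a component with at least three vertices. If `x` is
linked from `M`, a drift arc `x → y` (`A x y ≠ 0`) with `y ∉ M` is crossed by
`⁅E w s, ⁅⁅E s x, A⁆, E y t⁆⁆ = A x y • E w t`, with `s, w ∈ M` and `t ≠ y` in the component of
`y` (it exists by (b)); a mirror identity handles arcs into vertices linked to `M`. By strong connectivity every vertex is then linked to and from `M`, so `L`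
contains every `E a b` with `a ≠ b` and every `E a a - E b b`, and a generator of nonzero trace
supplies the last direction. Conversely, `L` lies in the block triangular matrices of any vertex
set closed under arcs, and in `sl n` when all generators are traceless.
-/

open Matrix

attribute [local instance 100] LieRing.ofAssociativeRing

/-- Two vertices are weakly connected if one is reachable from the other in the
symmetric closure of the adjacency relation. -/
def WeaklyConnected {V : Type*} (Adj : V → V → Prop) (u v : V) : Prop :=
  Relation.ReflTransGen (fun a b => Adj a b ∨ Adj b a) u v

section
variable {n : ℕ}

lemma E_mul_E_same (i j k : Fin n) : E i j * E j k = E i k := by simp [E]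

lemma E_mul_E_of_ne (i : Fin n) {j k : Fin n} (l : Fin n) (h : j ≠ k) : E i j * E k l = 0 := by
  simp [E, h]

lemma E_mul_mul_E (X : Matrix (Fin n) (Fin n) ℝ) (i j k l : Fin n) :
    E i j * X * E k l = X j k • E i l := by simp [E, smul_single]

lemma lie_E_E_of_ne {a b : Fin n} (c : Fin n) (h : a ≠ b) : ⁅E a c, E c b⁆ = E a b := by
  rw [Ring.lie_def, E_mul_E_same, E_mul_E_of_ne _ _ h.symm, sub_zero]

lemma lie_E_E_swap (a b : Fin n) : ⁅E a b, E b a⁆ = E a a - E b b := by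
  rw [Ring.lie_def, E_mul_E_same, E_mul_E_same]

lemma lie_lie_E_E (X : Matrix (Fin n) (Fin n) ℝ) {s x y t : Fin n} (hst : s ≠ t) (hxy : x ≠ y) :
    ⁅⁅E s x, X⁆, E y t⁆ = X x y • E s t + X t s • E y x := by
  have expand : ⁅⁅E s x, X⁆, E y t⁆ =
      E s x * X * E y t - X * (E s x * E y t) - E y t * E s x * X + E y t * X * E s x := by
    simp only [Ring.lie_def]
    noncomm_ring
  rw [expand, E_mul_E_of_ne _ _ hxy, E_mul_E_of_ne _ _ hst.symm, E_mul_mul_E, E_mul_mul_E]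
  simp

-- The outer bracket kills the term `X t s • E y x` of `lie_lie_E_E`.
lemma lie_E_lie_lie_E_E (X : Matrix (Fin n) (Fin n) ℝ) {w s x y t : Fin n} (hst : s ≠ t)
    (hxy : x ≠ y) (hwt : w ≠ t) (hsy : s ≠ y) (hwx : w ≠ x) :
    ⁅E w s, ⁅⁅E s x, X⁆, E y t⁆⁆ = X x y • E w t := by
  rw [lie_lie_E_E X hst hxy, lie_add, lie_smul, lie_smul, lie_E_E_of_ne s hwt, Ring.lie_def (E w s),
    E_mul_E_of_ne _ _ hsy, E_mul_E_of_ne _ _ hwx.symm]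
  simp

lemma lie_lie_lie_E_E_E (X : Matrix (Fin n) (Fin n) ℝ) {s x y t w : Fin n} (hst : s ≠ t)
    (hxy : x ≠ y) (hsw : s ≠ w) (hxt : x ≠ t) (hwy : w ≠ y) :
    ⁅⁅⁅E s x, X⁆, E y t⁆, E t w⁆ = X x y • E s w := by
  rw [lie_lie_E_E X hst hxy, add_lie, smul_lie, smul_lie, lie_E_E_of_ne t hsw, Ring.lie_def (E y x),
    E_mul_E_of_ne _ _ hxt, E_mul_E_of_ne _ _ hwy]
  simp

lemma sub_trace_smul_E_eq_sum (X : Matrix (Fin n) (Fin n) ℝ) (c : Fin n) :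
    X - X.trace • E c c = ∑ a, ∑ b, X a b • (E a b - if a = b then E c c else 0) := by
  simp only [smul_sub, Finset.sum_sub_distrib, smul_ite, smul_zero, Finset.sum_ite_eq,
    Finset.mem_univ, if_true, trace, diag, Finset.sum_smul]
  congr 1
  conv_lhs => rw [matrix_eq_sum_single X]
  simp [E, smul_single]

end

lemma weaklyConnected_equivalence {V : Type*} (Adj : V → V → Prop) :
    Equivalence (WeaklyConnected Adj) :=
  ⟨fun _ => .refl, fun h =>
    Relation.ReflTransGen.mono (fun _ _ => Or.symm) _ _ (Relation.ReflTransGen.swap _ _ h), .trans⟩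

lemma Set.exists_mem_ne_ne_of_two_lt_ncard {α : Type*} {s : Set α} (hs : 2 < s.ncard) (a b : α) :
    ∃ c ∈ s, c ≠ a ∧ c ≠ b := by
  have hab : ({a, b} : Set α).ncard < s.ncard :=
    (Set.ncard_insert_le a {b}).trans_lt (by rwa [Set.ncard_singleton])
  obtain ⟨c, hcs, hc⟩ := Set.sdiff_nonempty_of_ncard_lt_ncard hab
  simp only [Set.mem_insert_iff, Set.mem_singleton_iff, not_or] at hc
  exact ⟨c, hcs, hc⟩

section
variable {n : ℕ} (L : LieSubalgebra ℝ (Matrix (Fin n) (Fin n) ℝ))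

def Linked (a b : Fin n) : Prop := a = b ∨ E a b ∈ L

variable {L}

lemma Linked.E_mem {a b : Fin n} (h : Linked L a b) (hab : a ≠ b) : E a b ∈ L :=
  h.resolve_left hab

lemma Linked.trans {a b c : Fin n} (hab : Linked L a b) (hbc : Linked L b c) : Linked L a c := by
  rcases hab with rfl | hab
  · exact hbc
  rcases hbc with rfl | hbc
  · exact .inr hab
  rcases eq_or_ne a c with rfl | hac
  · exact .inl rfl
  · exact .inr (lie_E_E_of_ne b hac ▸ L.lie_mem hab hbc)

lemma Linked.of_reflTransGen {r : Fin n → Fin n → Prop} (hr : ∀ a b, r a b → Linked L a b)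
    {a b : Fin n} (h : Relation.ReflTransGen r a b) : Linked L a b := by
  induction h with
  | refl => exact .inl rfl
  | tail _ hbc ih => exact ih.trans (hr _ _ hbc)

variable {A : Matrix (Fin n) (Fin n) ℝ} {r : Fin n → Fin n → Prop} {v₀ : Fin n}

lemma Linked.of_drift_right (hr : Equivalence r) (hA : A ∈ L)
    (hlink : ∀ a b, r a b → Linked L a b) (hpair : ∀ v, ∃ t, r v t ∧ t ≠ v)
    (htriple : ∀ a b, ∃ u, r v₀ u ∧ u ≠ a ∧ u ≠ b)
    {x y : Fin n} (hx : Linked L v₀ x) (hxy : A x y ≠ 0) : Linked L v₀ y := by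
  by_cases hy : r v₀ y
  · exact hlink _ _ hy
  rcases eq_or_ne x y with rfl | hne
  · exact hx
  obtain ⟨t, hyt, hty⟩ := hpair y
  have ht : ¬ r v₀ t := fun h => hy (hr.trans h (hr.symm hyt))
  obtain ⟨s, hs, hsx, -⟩ := htriple x x
  obtain ⟨w, hw, hws, hwx⟩ := htriple s x
  have hEsx : E s x ∈ L := ((hlink _ _ (hr.symm hs)).trans hx).E_mem hsx
  have hEws : E w s ∈ L := (hlink _ _ (hr.trans (hr.symm hw) hs)).E_mem hws
  have hEyt : E y t ∈ L := (hlink _ _ hyt).E_mem hty.symm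
  have hEwt : E w t ∈ L := by
    have h := L.lie_mem hEws (L.lie_mem (L.lie_mem hEsx hA) hEyt)
    rw [lie_E_lie_lie_E_E A (fun h : s = t => ht (h ▸ hs)) hne (fun h : w = t => ht (h ▸ hw))
      (fun h : s = y => hy (h ▸ hs)) hwx] at h
    exact (L.toSubmodule.smul_mem_iff hxy).1 h
  exact (hlink _ _ hw).trans (Linked.trans (.inr hEwt) (hlink _ _ (hr.symm hyt)))

lemma Linked.of_drift_left (hr : Equivalence r) (hA : A ∈ L)
    (hlink : ∀ a b, r a b → Linked L a b) (hpair : ∀ v, ∃ t, r v t ∧ t ≠ v)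
    (htriple : ∀ a b, ∃ u, r v₀ u ∧ u ≠ a ∧ u ≠ b)
    {x y : Fin n} (hy : Linked L y v₀) (hxy : A x y ≠ 0) : Linked L x v₀ := by
  by_cases hx : r x v₀
  · exact hlink _ _ hx
  rcases eq_or_ne x y with rfl | hne
  · exact hy
  obtain ⟨s, hxs, hsx⟩ := hpair x
  have hs : ¬ r v₀ s := fun h => hx (hr.trans hxs (hr.symm h))
  obtain ⟨t, ht, hty, -⟩ := htriple y y
  obtain ⟨w, hw, hwt, hwy⟩ := htriple t y
  have hEsx : E s x ∈ L := (hlink _ _ (hr.symm hxs)).E_mem hsx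
  have hEyt : E y t ∈ L := (hy.trans (hlink _ _ ht)).E_mem hty.symm
  have hEtw : E t w ∈ L := (hlink _ _ (hr.trans (hr.symm ht) hw)).E_mem hwt.symm
  have hEsw : E s w ∈ L := by
    have h := L.lie_mem (L.lie_mem (L.lie_mem hEsx hA) hEyt) hEtw
    rw [lie_lie_lie_E_E_E A (fun h : s = t => hs (h ▸ ht)) hne
      (fun h : s = w => hs (h ▸ hw)) (fun h : x = t => hx (h ▸ hr.symm ht)) hwy] at h
    exact (L.toSubmodule.smul_mem_iff hxy).1 h
  exact (hlink _ _ hxs).trans (Linked.trans (.inr hEsw) (hlink _ _ (hr.symm hw)))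

lemma linked_of_stronglyConnected (hr : Equivalence r) (hA : A ∈ L)
    (hlink : ∀ a b, r a b → Linked L a b) (hpair : ∀ v, ∃ t, r v t ∧ t ≠ v)
    (htriple : ∀ a b, ∃ u, r v₀ u ∧ u ≠ a ∧ u ≠ b)
    (hsc : StronglyConnected fun a b => A a b ≠ 0 ∨ r a b) (a b : Fin n) : Linked L a b := by
  have from_v₀ : Linked L v₀ b := by
    induction hsc v₀ b with
    | refl => exact .inl rfl
    | tail _ hstep ih =>
      rcases hstep with hdrift | hcontr
      · exact ih.of_drift_right hr hA hlink hpair htriple hdrift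
      · exact ih.trans (hlink _ _ hcontr)
  have to_v₀ : Linked L a v₀ := by
    induction hsc a v₀ using Relation.ReflTransGen.head_induction_on with
    | refl => exact .inl rfl
    | head hstep _ ih =>
      rcases hstep with hdrift | hcontr
      · exact ih.of_drift_left hr hA hlink hpair htriple hdrift
      · exact (hlink _ _ hcontr).trans ih
  exact to_v₀.trans from_v₀

lemma linked_of_weaklyConnected {c : Fin n → Fin n → Prop} (hA : A ∈ L)
    (hc : ∀ a b, c a b → E a b ∈ L)
    (ha : ∀ u v, WeaklyConnected c u v → Relation.ReflTransGen c u v)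
    (hb : ∀ v, 2 ≤ {u | WeaklyConnected c v u}.ncard)
    (hv₀ : 3 ≤ {u | WeaklyConnected c v₀ u}.ncard)
    (hsc : StronglyConnected fun a b => A a b ≠ 0 ∨ c a b) (a b : Fin n) : Linked L a b :=
  linked_of_stronglyConnected (weaklyConnected_equivalence c) hA
    (fun a b h => Linked.of_reflTransGen (fun a b h => .inr (hc a b h)) (ha a b h))
    (fun v => Set.exists_ne_of_one_lt_ncard (hb v) v) (Set.exists_mem_ne_ne_of_two_lt_ncard hv₀)
    (fun a b => Relation.ReflTransGen.mono
      (fun _ _ => Or.imp_right fun h => .single (.inl h)) _ _ (hsc a b)) a b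

lemma eq_top_of_linked_of_trace_ne_zero (hlink : ∀ a b, Linked L a b) {D : Matrix (Fin n) (Fin n) ℝ}
    (hD : D ∈ L) (htr : D.trace ≠ 0) : L = ⊤ := by
  obtain ⟨c, -, -⟩ := Finset.exists_ne_zero_of_sum_ne_zero htr
  have hsub : ∀ X, X - X.trace • E c c ∈ L := fun X => by
    rw [sub_trace_smul_E_eq_sum]
    refine sum_mem fun a _ => sum_mem fun b _ => L.smul_mem _ ?_
    split_ifs with hab
    · subst hab
      rcases eq_or_ne a c with rfl | hac
      · rw [sub_self]; exact L.zero_mem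
      · exact lie_E_E_swap a c ▸ L.lie_mem ((hlink a c).E_mem hac) ((hlink c a).E_mem hac.symm)
    · simpa using (hlink a b).E_mem hab
  have hcc : E c c ∈ L := (L.toSubmodule.smul_mem_iff htr).1 (by simpa using L.sub_mem hD (hsub D))
  exact eq_top_iff.2 fun X _ => by simpa using L.add_mem (hsub X) (L.smul_mem X.trace hcc)

end

def Subalgebra.toLieSubalgebra {R A : Type*} [CommRing R] [Ring A] [Algebra R A]
    (K : Subalgebra R A) : LieSubalgebra R A :=
  { K.toSubmodule with
    lie_mem' := fun hx hy => by
      rw [Ring.lie_def]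
      exact K.sub_mem (K.mul_mem hx hy) (K.mul_mem hy hx) }

section
variable {ι R : Type*} [Fintype ι] [DecidableEq ι] [CommRing R] [Nontrivial R]

lemma stronglyConnected_of_lieSpan_eq_top {S : Set (Matrix ι ι R)}
    (htop : LieSubalgebra.lieSpan R _ S = ⊤) {Adj : ι → ι → Prop}
    (hS : ∀ X ∈ S, ∀ a b, X a b ≠ 0 → Adj a b) : StronglyConnected Adj := by
  intro u v
  by_contra huv
  -- Blocks are `Prop`-valued with `False < True`: no entries from vertices reachable from `u`
  -- to the others.
  let K := (blockTriangularSubalgebra R R (Relation.ReflTransGen Adj u)).toLieSubalgebra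
  have hle : LieSubalgebra.lieSpan R _ S ≤ K := by
    refine LieSubalgebra.lieSpan_le.2 fun X hX a b hab => ?_
    obtain ⟨-, hreach⟩ := lt_iff_le_not_ge.1 hab
    obtain ⟨hua, hub⟩ := Classical.not_imp.1 hreach
    by_contra h
    exact hub (hua.tail (hS X hX a b h))
  have hK : single u v (1 : R) ∈ K := hle (htop ▸ LieSubalgebra.mem_top _)
  simpa using hK (lt_iff_le_not_ge.2 ⟨fun h => absurd h huv, fun h => huv (h .refl)⟩)

lemma exists_trace_ne_zero_of_lieSpan_eq_top [Nonempty ι] {S : Set (Matrix ι ι R)}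
    (htop : LieSubalgebra.lieSpan R _ S = ⊤) : ∃ X ∈ S, X.trace ≠ 0 := by
  by_contra! h
  have hle : LieSubalgebra.lieSpan R _ S ≤ LieAlgebra.SpecialLinear.sl ι R :=
    LieSubalgebra.lieSpan_le.2 h
  obtain ⟨c⟩ := ‹Nonempty ι›
  have : trace (single c c (1 : R)) = 0 := hle (htop ▸ LieSubalgebra.mem_top _)
  simp at this

end

theorem GLn_accessibility_iff_general
    (n m : ℕ)
    (A : Matrix (Fin n) (Fin n) ℝ)
    (ij : Fin m → Fin n × Fin n)
    (contrAdj driftAdj : Fin n → Fin n → Prop)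
    (hcontr : contrAdj = fun a b => ∃ k, ij k = (a, b))
    (hdrift : driftAdj = fun a b => A a b ≠ 0)
    (ha : ∀ u v : Fin n, WeaklyConnected contrAdj u v → Relation.ReflTransGen contrAdj u v)
    (hb : ∀ v : Fin n, 2 ≤ {u : Fin n | WeaklyConnected contrAdj v u}.ncard)
    (hc : ∃ v : Fin n, 3 ≤ {u : Fin n | WeaklyConnected contrAdj v u}.ncard) :
    LieSubalgebra.lieSpan ℝ (Matrix (Fin n) (Fin n) ℝ)
        ({A} ∪ Set.range fun k => E (ij k).1 (ij k).2) = ⊤ ↔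
      (StronglyConnected (fun a b : Fin n => driftAdj a b ∨ contrAdj a b) ∧
        ((∃ k, (ij k).1 = (ij k).2) ∨ A.trace ≠ 0)) := by
  subst hcontr hdrift
  obtain ⟨v₀, hv₀⟩ := hc
  constructor
  · intro htop
    refine ⟨stronglyConnected_of_lieSpan_eq_top htop ?_, ?_⟩
    · rintro X (rfl | ⟨k, rfl⟩) a b hab
      · exact .inl hab
      · exact .inr ⟨k, Prod.ext_iff.2 (by simpa [E, single_apply] using hab)⟩
    · have : Nonempty (Fin n) := ⟨v₀⟩
      obtain ⟨X, (rfl | ⟨k, rfl⟩), htr⟩ := exists_trace_ne_zero_of_lieSpan_eq_top htop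
      · exact .inr htr
      · exact .inl ⟨k, by_contra fun h => htr (by simp [E, trace_single_eq_of_ne _ _ _ h])⟩
  · rintro ⟨hsc, hloop⟩
    set L := LieSubalgebra.lieSpan ℝ (Matrix (Fin n) (Fin n) ℝ)
      ({A} ∪ Set.range fun k => E (ij k).1 (ij k).2)
    have hA : A ∈ L := LieSubalgebra.subset_lieSpan (.inl rfl)
    have hE : ∀ k, E (ij k).1 (ij k).2 ∈ L := fun k => LieSubalgebra.subset_lieSpan (.inr ⟨k, rfl⟩)
    have hall := linked_of_weaklyConnected hA
      (fun a b ⟨k, hk⟩ => by simpa [hk] using hE k) ha hb hv₀ hsc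
    obtain ⟨D, hD, htr⟩ : ∃ D ∈ L, D.trace ≠ 0 := by
      rcases hloop with ⟨k, hk⟩ | htr
      · exact ⟨_, hE k, by simp [E, hk]⟩
      · exact ⟨A, hA, htr⟩
    exact eq_top_of_linked_of_trace_ne_zero hall hD htr

/-- Lie algebra rank condition for the bilinear system with drift on `GL⁺(n)`:
under the stated assumptions on the weakly connected components of the controlled
interaction digraph, the generated Lie algebra is all of `gl(n, ℝ)` iff the union
digraph is strongly connected, and the controlled digraph has a self-loop or the
drift has nonzero trace. -/
theorem GLn_accessibility_iff
    (n m : ℕ) (hn : 1 ≤ n)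
    (A : Matrix (Fin n) (Fin n) ℝ)
    (ij : Fin m → Fin n × Fin n)
    (contrAdj driftAdj : Fin n → Fin n → Prop)
    (hcontr : contrAdj = fun a b => ∃ k, ij k = (a, b))
    (hdrift : driftAdj = fun a b => A a b ≠ 0)
    (ha : ∀ u v : Fin n, WeaklyConnected contrAdj u v → Relation.ReflTransGen contrAdj u v)
    (hb : ∀ v : Fin n, 2 ≤ {u : Fin n | WeaklyConnected contrAdj v u}.ncard)
    (hc : ∃ v : Fin n, 3 ≤ {u : Fin n | WeaklyConnected contrAdj v u}.ncard) :
    LieSubalgebra.lieSpan ℝ (Matrix (Fin n) (Fin n) ℝ)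
        ({A} ∪ Set.range fun k => E (ij k).1 (ij k).2) = ⊤ ↔
      (StronglyConnected (fun a b : Fin n => driftAdj a b ∨ contrAdj a b) ∧
        ((∃ k, (ij k).1 = (ij k).2) ∨ A.trace ≠ 0)) :=
  GLn_accessibility_iff_general n m A ij contrAdj driftAdj hcontr hdrift ha hb hc
end

section
/- Let n ≥ 1, let A ∈ Matrix (Fin n) (Fin n) ℝ be traceless, let (i_1,j_1),…,(i_{m_1},j_{m_1}) be pairs in Fin n with i_k ≠ j_k, and let (i_{m_1+1},j_{m_1+1}),…,(i_{m_2},j_{m_2}) be further pairs with i_k ≠ j_k. Let G_contr be the digraph on Fin n with arcs (i_1,j_1),…,(i_{m_1},j_{m_1}) and G_drift the digraph with an arc (i,j) exactly when i ≠ j and A i j ≠ 0. If the union digraph G_drift ∪ G_contr is not strongly connected, then the Lie subalgebra of Matrix (Fin n) (Fin n) ℝ generated by {A} ∪ {E i_1 j_1, …, E i_{m_1} j_{m_1}} ∪ {C i_{m_1+1} j_{m_1+1}, …, C i_{m_2} j_{m_2}} is not equal to sl(n,ℝ); equivalently, if this generated Lie subalgebra equals sl(n,ℝ), then G_drift ∪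 G_contr is strongly connected. -/
/-!
Fix `u, v` with `v` unreachable from `u` in the union digraph and grade the vertices by the
proposition "reachable from `u`" (blocks indexed by `Prop`, where `False < True`). A matrix whose
off-diagonal support lies in the digraph has no entry from a reachable row to an unreachable
column, i.e. it is block triangular for this grading; this covers all generators. Block triangular
matrices form an associative, hence Lie, subalgebra, which therefore contains the generated Lie
algebra but not the traceless matrix `E u v`.
-/

open Matrix

attribute [local instance 100] LieRing.ofAssociativeRing

/-- `C i j = E i i - E j j`, a diagonal traceless matrix. -/
noncomputable def C {n : ℕ} (i j : Fin n) : Matrix (Fin n) (Fin n) ℝ :=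
  E i i - E j j

/-- The special linear Lie algebra `sl(n, ℝ)` of traceless matrices. -/
noncomputable def sl (n : ℕ) : LieSubalgebra ℝ (Matrix (Fin n) (Fin n) ℝ) :=
  LieAlgebra.SpecialLinear.sl (Fin n) ℝ

namespace Matrix

variable {m K : Type*} [Fintype m] [DecidableEq m] [CommRing K]

variable (K) in
abbrev blockTriangularLieSubalgebra {α : Type*} [LinearOrder α] (b : m → α) :
    LieSubalgebra K (Matrix m m K) :=
  lieSubalgebraOfSubalgebra K _ (blockTriangularSubalgebra K K b)

theorem sl_not_le_blockTriangularLieSubalgebra [Nontrivial K] {α : Type*} [LinearOrder α]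
    {b : m → α} {i j : m} (hij : b j < b i) :
    ¬ LieAlgebra.SpecialLinear.sl m K ≤ blockTriangularLieSubalgebra K b := by
  intro hle
  have hsingle : single i j (1 : K) ∈ LieAlgebra.SpecialLinear.sl m K :=
    trace_single_eq_of_ne i j 1 fun h => hij.ne (congrArg b h.symm)
  have hzero : single i j (1 : K) i j = 0 := hle hsingle hij
  exact one_ne_zero (single_apply_same i j (1 : K) ▸ hzero)

theorem blockTriangular_reflTransGen {R V : Type*} [Zero R] {Adj : V → V → Prop} (u : V)
    {M : Matrix V V R} (hM : ∀ i j, i ≠ j → M i j ≠ 0 → Adj i j) :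
    M.BlockTriangular (Relation.ReflTransGen Adj u ·) := by
  intro i j hij
  by_contra hne
  have hij_ne : i ≠ j := by rintro rfl; exact hij.false
  exact hij.not_ge fun hi => hi.tail (hM i j hij_ne hne)

end Matrix

theorem Relation.reflTransGen_lt_reflTransGen_self {V : Type*} {Adj : V → V → Prop} {u v : V}
    (huv : ¬ Relation.ReflTransGen Adj u v) :
    Relation.ReflTransGen Adj u v < Relation.ReflTransGen Adj u u :=
  lt_of_le_not_ge (fun _ => .refl) fun h => huv (h .refl)

theorem eq_of_E_apply_ne_zero {n : ℕ} {a b i j : Fin n} (h : E a b i j ≠ 0) : (a, b) = (i, j) := by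
  by_contra h'
  exact h (single_apply_of_ne _ _ _ _ _ (by simpa using h'))

theorem C_apply_of_ne {n : ℕ} (a b : Fin n) {i j : Fin n} (h : i ≠ j) : C a b i j = 0 := by
  simp only [C, E, Matrix.sub_apply, single_apply]
  grind

theorem SLn_not_strongly_connected_implies_ne_sl_general
    (n m₁ m₂ : ℕ)
    (A : Matrix (Fin n) (Fin n) ℝ)
    (ijE : Fin m₁ → Fin n × Fin n)
    (ijC : Fin m₂ → Fin n × Fin n)
    (contrAdj driftAdj : Fin n → Fin n → Prop)
    (hcontr : contrAdj = fun a b => ∃ k, ijE k = (a, b))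
    (hdrift : driftAdj = fun a b => a ≠ b ∧ A a b ≠ 0)
    (hconn : ¬ StronglyConnected (fun a b : Fin n => driftAdj a b ∨ contrAdj a b)) :
    LieSubalgebra.lieSpan ℝ (Matrix (Fin n) (Fin n) ℝ)
        ({A} ∪ (Set.range fun k => E (ijE k).1 (ijE k).2) ∪
          (Set.range fun k => C (ijC k).1 (ijC k).2)) ≠ sl n := by
  obtain ⟨u, v, huv⟩ := by simpa only [StronglyConnected, not_forall] using hconn
  intro hspan
  refine sl_not_le_blockTriangularLieSubalgebra
    (Relation.reflTransGen_lt_reflTransGen_self huv) (hspan ▸ LieSubalgebra.lieSpan_le.2 ?_)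
  rintro X ((rfl | ⟨k, rfl⟩) | ⟨k, rfl⟩) <;> refine blockTriangular_reflTransGen u ?_ <;>
    intro i j hij hX
  · exact .inl (hdrift ▸ ⟨hij, hX⟩)
  · exact .inr (hcontr ▸ ⟨k, eq_of_E_apply_ne_zero hX⟩)
  · exact absurd (C_apply_of_ne _ _ hij) hX

/-- Necessity of strong connectivity of the union digraph for accessibility on
`SL(n)`: if the union of the drift and controlled interaction digraphs is not
strongly connected, then the generated Lie algebra is not `sl(n, ℝ)`. -/
theorem SLn_not_strongly_connected_implies_ne_sl
    (n m₁ m₂ : ℕ) (hn : 1 ≤ n)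
    (A : Matrix (Fin n) (Fin n) ℝ) (hA : A.trace = 0)
    (ijE : Fin m₁ → Fin n × Fin n) (hijE : ∀ k, (ijE k).1 ≠ (ijE k).2)
    (ijC : Fin m₂ → Fin n × Fin n) (hijC : ∀ k, (ijC k).1 ≠ (ijC k).2)
    (contrAdj driftAdj : Fin n → Fin n → Prop)
    (hcontr : contrAdj = fun a b => ∃ k, ijE k = (a, b))
    (hdrift : driftAdj = fun a b => a ≠ b ∧ A a b ≠ 0)
    (hconn : ¬ StronglyConnected (fun a b : Fin n => driftAdj a b ∨ contrAdj a b)) :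
    LieSubalgebra.lieSpan ℝ (Matrix (Fin n) (Fin n) ℝ)
        ({A} ∪ (Set.range fun k => E (ijE k).1 (ijE k).2) ∪
          (Set.range fun k => C (ijC k).1 (ijC k).2)) ≠ sl n :=
  SLn_not_strongly_connected_implies_ne_sl_general n m₁ m₂ A ijE ijC contrAdj driftAdj hcontr hdrift
    hconn
end
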